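/- Let A be a finite nonempty set of positive integers. For all n, d, e ∈ ℕ: if d < fI(n) and e ≥ fII(n), then W_A^$(n;d,e) = II. -/

import Mathlib

/-!
Strong induction on `n`, proving two claims together. The mover wins if she holds at least
`fI n` dollars and either `n` is a NIM win or the opponent holds less than `fII n`: she plays
a move `a` attaining the minimum defining `fI n`, so that as the new second player she keeps
`d - a ≥ fI n - a = fII (n - a)` dollars. The mover loses if the opponent holds at least
`fII n` dollars and either `n` is a NIM loss or she holds less than `fI n`: after any move `a`
the opponent holds at least `fII n ≥ fI (n - a)`, and either `n - a` is a NIM win or she keeps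
`d - a < fI n - a ≤ fII (n - a)`.
-/

/-- Standard NIM winner for the one-pile subtraction game with move set `A`:
`nimW A n = true` means Player I (the player to move) wins with `n` stones;
`nimW A n = false` means Player II wins.  (For `A` consisting of positive
integers this is exactly: Player I wins iff some `a ∈ A` with `a ≤ n` moves to
a Player-II-win position `n - a`.) -/
def nimW (A : Finset ℕ) : ℕ → Bool
  | n =>
    decide (((A.filter fun a => 0 < a ∧ a ≤ n).attach.filter (fun a =>
      nimW A (n - a.1) = false)).Nonempty)
decreasing_by
  all_goals
    have h := a.2
    simp only [Finset.mem_filter] at h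
    omega

/-- NIM-with-cash winner: `nimWC A n d e = true` means the player to move,
having `d` dollars while the opponent has `e` dollars, wins with `n` stones
on the board.  The player to move wins iff there is `a ∈ A` with `a ≤ n`
and `a ≤ d` such that the resulting position `(n - a; e, d - a)` is a loss
for the (new) player to move. -/
def nimWC (A : Finset ℕ) : ℕ → ℕ → ℕ → Bool
  | n, d, e =>
    decide (((A.filter fun a => 0 < a ∧ a ≤ n ∧ a ≤ d).attach.filter (fun a =>
      nimWC A (n - a.1) e (d - a.1) = false)).Nonempty)
decreasing_by
  all_goals
    have h := a.2
    simp only [Finset.mem_filter] at h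
    omega

/-- `fpair A n = (fI A n, fII A n)`, defined by simultaneous recursion:
for `n < min A` both are `0`; otherwise `fII n = max { fI (n-a) : a ∈ A, a ≤ n }`
(so in particular `fII n = 0` when there is no legal move), and
`fI n = min { fII (n-a) + a : a ∈ A, a ≤ n, nimW A (n-a) = false }` if `nimW A n`,
while `fI n = min { fII (n-a) + a : a ∈ A, a ≤ n, fI (n-a) = fII n }` otherwise. -/
def fpair (A : Finset ℕ) : ℕ → ℕ × ℕ
  | n =>
    let opts := (A.filter fun a => 0 < a ∧ a ≤ n).attach
    let fIIn := (opts.image fun a => (fpair A (n - a.1)).1).max.unbotD 0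
    (if nimW A n then
        ((opts.filter fun a => nimW A (n - a.1) = false).image
          fun a => (fpair A (n - a.1)).2 + a.1).min.untopD 0
      else
        ((opts.filter fun a => (fpair A (n - a.1)).1 = fIIn).image
          fun a => (fpair A (n - a.1)).2 + a.1).min.untopD 0,
     fIIn)
decreasing_by
  all_goals
    have h := a.2
    simp only [Finset.mem_filter] at h
    omega

/-- `fI A n`: the least amount of money the player to move needs to win
(richness threshold for Player I), as defined in the paper. -/
def fI (A : Finset ℕ) (n : ℕ) : ℕ := (fpair A n).1

/-- `fII A n`: the richness threshold for the player not moving (Player II). -/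
def fII (A : Finset ℕ) (n : ℕ) : ℕ := (fpair A n).2

namespace Finset

variable {α : Type*} [LinearOrder α] {s : Finset α}

theorem unbotD_max_mem (hs : s.Nonempty) (d : α) : s.max.unbotD d ∈ s := by
  rw [← coe_max' hs, WithBot.unbotD_coe]
  exact max'_mem s hs

theorem untopD_min_mem (hs : s.Nonempty) (d : α) : s.min.untopD d ∈ s := by
  rw [← coe_min' hs, WithTop.untopD_coe]
  exact min'_mem s hs

end Finset

section NimWithCash

variable {A : Finset ℕ} {n a d e : ℕ}

def legalMoves (A : Finset ℕ) (n : ℕ) : Finset ℕ := A.filter fun a => 0 < a ∧ a ≤ n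

theorem mem_legalMoves : a ∈ legalMoves A n ↔ a ∈ A ∧ 0 < a ∧ a ≤ n := Finset.mem_filter

theorem nimW_eq_true_iff :
    nimW A n = true ↔ ∃ a ∈ A, 0 < a ∧ a ≤ n ∧ nimW A (n - a) = false := by
  rw [nimW]
  simp [Finset.filter_nonempty_iff, and_assoc]

theorem nimWC_eq_true_iff :
    nimWC A n d e = true ↔
      ∃ a ∈ A, 0 < a ∧ a ≤ n ∧ a ≤ d ∧ nimWC A (n - a) e (d - a) = false := by
  rw [nimWC]
  simp [Finset.filter_nonempty_iff, and_assoc]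

theorem nimWC_eq_false_iff :
    nimWC A n d e = false ↔
      ∀ a ∈ A, 0 < a → a ≤ n → a ≤ d → nimWC A (n - a) e (d - a) = true := by
  rw [← Bool.not_eq_true, nimWC_eq_true_iff]
  simp

theorem fII_eq :
    fII A n = ((legalMoves A n).attach.image fun a =>
      fI A (n - a.1)).max.unbotD 0 := by
  rw [fII, fpair]
  rfl

theorem fI_eq_of_nimW_true (h : nimW A n = true) :
    fI A n = (((legalMoves A n).attach.filter
      (fun a => nimW A (n - a.1) = false)).image fun a => fII A (n - a.1) + a.1).min.untopD 0 := by
  rw [fI, fpair]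
  simp only [h, if_true]
  rfl

theorem fI_eq_of_nimW_false (h : nimW A n = false) :
    fI A n = (((legalMoves A n).attach.filter
      (fun a => fI A (n - a.1) = fII A n)).image fun a => fII A (n - a.1) + a.1).min.untopD 0 := by
  conv_lhs => rw [fI, fpair]
  rw [fII_eq]
  simp only [h, Bool.false_eq_true, if_false]
  rfl

theorem fI_sub_le_fII (ha : a ∈ A) (ha0 : 0 < a) (han : a ≤ n) : fI A (n - a) ≤ fII A n := by
  rw [fII_eq]
  exact WithBot.le_unbotD <| Finset.le_max <| Finset.mem_image_of_mem _ <|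
    Finset.mem_attach _ ⟨a, mem_legalMoves.2 ⟨ha, ha0, han⟩⟩

theorem exists_fI_sub_eq_fII (h : 0 < fII A n) :
    ∃ a ∈ A, 0 < a ∧ a ≤ n ∧ fI A (n - a) = fII A n := by
  have hne : ((legalMoves A n).attach.image fun a => fI A (n - a.1)).Nonempty := by
    by_contra hempty
    rw [Finset.not_nonempty_iff_eq_empty] at hempty
    simp [fII_eq, hempty] at h
  have hmem := Finset.unbotD_max_mem hne 0
  rw [← fII_eq] at hmem
  simpa [mem_legalMoves, and_assoc] using hmem

theorem fI_le_of_nimW_true (h : nimW A n = true) (ha : a ∈ A) (ha0 : 0 < a) (han : a ≤ n)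
    (hwin : nimW A (n - a) = false) : fI A n ≤ fII A (n - a) + a := by
  rw [fI_eq_of_nimW_true h]
  exact WithTop.untopD_le <| Finset.min_le <| Finset.mem_image_of_mem _ <|
    Finset.mem_filter.2 ⟨Finset.mem_attach _ ⟨a, mem_legalMoves.2 ⟨ha, ha0, han⟩⟩, hwin⟩

theorem exists_fI_eq_of_nimW_true (h : nimW A n = true) :
    ∃ a ∈ A, 0 < a ∧ a ≤ n ∧ nimW A (n - a) = false ∧ fI A n = fII A (n - a) + a := by
  obtain ⟨a, ha, ha0, han, hwin⟩ := nimW_eq_true_iff.1 h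
  have hne : ((legalMoves A n).attach.filter fun b => nimW A (n - b.1) = false).Nonempty :=
    ⟨⟨a, mem_legalMoves.2 ⟨ha, ha0, han⟩⟩, by simpa using hwin⟩
  have hmem := Finset.untopD_min_mem (hne.image fun b => fII A (n - b.1) + b.1) 0
  rw [← fI_eq_of_nimW_true h] at hmem
  obtain ⟨⟨b, hb⟩, hbf, hbeq⟩ := Finset.mem_image.1 hmem
  obtain ⟨hbA, hb0, hbn⟩ := mem_legalMoves.1 hb
  exact ⟨b, hbA, hb0, hbn, (Finset.mem_filter.1 hbf).2, hbeq.symm⟩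

theorem exists_fI_eq_of_nimW_false (h : nimW A n = false) (hII : 0 < fII A n) :
    ∃ a ∈ A, 0 < a ∧ a ≤ n ∧ fI A (n - a) = fII A n ∧ fI A n = fII A (n - a) + a := by
  obtain ⟨a, ha, ha0, han, hmax⟩ := exists_fI_sub_eq_fII hII
  have hne : ((legalMoves A n).attach.filter fun b => fI A (n - b.1) = fII A n).Nonempty :=
    ⟨⟨a, mem_legalMoves.2 ⟨ha, ha0, han⟩⟩, by simpa using hmax⟩
  have hmem := Finset.untopD_min_mem (hne.image fun b => fII A (n - b.1) + b.1) 0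
  rw [← fI_eq_of_nimW_false h] at hmem
  obtain ⟨⟨b, hb⟩, hbf, hbeq⟩ := Finset.mem_image.1 hmem
  obtain ⟨hbA, hb0, hbn⟩ := mem_legalMoves.1 hb
  exact ⟨b, hbA, hb0, hbn, (Finset.mem_filter.1 hbf).2, hbeq.symm⟩

theorem exists_move_fI_eq (h : nimW A n = true ∨ e < fII A n) :
    ∃ a ∈ A, 0 < a ∧ a ≤ n ∧ (nimW A (n - a) = false ∨ e < fI A (n - a)) ∧
      fI A n = fII A (n - a) + a := by
  rcases Bool.eq_false_or_eq_true (nimW A n) with hW | hW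
  · obtain ⟨a, ha, ha0, han, hwin, hfI⟩ := exists_fI_eq_of_nimW_true hW
    exact ⟨a, ha, ha0, han, .inl hwin, hfI⟩
  · have he := h.resolve_left (by simp [hW])
    obtain ⟨a, ha, ha0, han, hmax, hfI⟩ := exists_fI_eq_of_nimW_false hW (by omega)
    exact ⟨a, ha, ha0, han, .inr (hmax ▸ he), hfI⟩

theorem nimW_sub_eq_true_or_lt_fII (h : nimW A n = false ∨ d < fI A n) (ha : a ∈ A)
    (ha0 : 0 < a) (han : a ≤ n) (had : a ≤ d) :
    nimW A (n - a) = true ∨ d - a < fII A (n - a) := by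
  rcases Bool.eq_false_or_eq_true (nimW A (n - a)) with hwin | hlose
  · exact .inl hwin
  · have hW : nimW A n = true := nimW_eq_true_iff.2 ⟨a, ha, ha0, han, hlose⟩
    have hd := h.resolve_left (by simp [hW])
    have := fI_le_of_nimW_true hW ha ha0 han hlose
    exact .inr (by omega)

theorem nimWC_eq_true_and_eq_false (n : ℕ) : ∀ d e,
    (fI A n ≤ d → (nimW A n = true ∨ e < fII A n) → nimWC A n d e = true) ∧
    (fII A n ≤ e → (nimW A n = false ∨ d < fI A n) → nimWC A n d e = false) := by
  induction n using Nat.strong_induction_on with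
  | _ n ih =>
    intro d e
    constructor
    · intro hd h
      obtain ⟨a, ha, ha0, han, hnext, hfI⟩ := exists_move_fI_eq h
      exact nimWC_eq_true_iff.2 ⟨a, ha, ha0, han, by omega,
        (ih (n - a) (by omega) e (d - a)).2 (by omega) hnext⟩
    · intro he h
      exact nimWC_eq_false_iff.2 fun a ha ha0 han had =>
        (ih (n - a) (by omega) e (d - a)).1 ((fI_sub_le_fII ha ha0 han).trans he)
          (nimW_sub_eq_true_or_lt_fII h ha ha0 han had)

end NimWithCash

theorem nimWC_rich_II_general (A : Finset ℕ)
    (n d e : ℕ) (hd : d < fI A n) (he : fII A n ≤ e) :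
    nimWC A n d e = false :=
  (nimWC_eq_true_and_eq_false n d e).2 he (.inr hd)

/-- If the player to move has fewer than `fI n` dollars and the
opponent has at least `fII n` dollars, the opponent wins NIM with cash. -/
theorem nimWC_rich_II (A : Finset ℕ) (hA : A.Nonempty) (hpos : ∀ a ∈ A, 0 < a)
    (n d e : ℕ) (hd : d < fI A n) (he : fII A n ≤ e) :
    nimWC A n d e = false :=
  nimWC_rich_II_general A n d e hd he
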